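/- arXiv:2305.18796 — 3 statements merged into one kernel-verified Lean document; each statement's English description precedes it below -/
import Mathlib

section
/- Let D be an integral domain with fraction field K, Q a prime ideal of D, M = D ∖ Q, and let J be a fractional s-ideal of M. Then (JD)_v = J_v·D, i.e., ((JD)⁻¹)⁻¹ (computed for D-submodules of K) equals the D-submodule of K generated by J_v = (J⁻¹)⁻¹ (computed inside q(M)). -/
open scoped Pointwise

noncomputable section

variable (D : Type*) [CommRing D] [IsDomain D]

/-- The image in the fraction field `K` of the monoid `M = D \ Q`. -/
def monoidMK (Q : Ideal D) : Set (FractionRing D) :=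
  {x | ∃ a : D, a ∉ Q ∧ x = algebraMap D (FractionRing D) a}

/-- The quotient group `q(M) = {a·b⁻¹ | a, b ∈ M} ⊆ K` of the monoid `M = D \ Q`. -/
def quotM (Q : Ideal D) : Set (FractionRing D) :=
  {x | ∃ a b : D, a ∉ Q ∧ b ∉ Q ∧
    x = algebraMap D (FractionRing D) a / algebraMap D (FractionRing D) b}

/-- For a subset `X ⊆ q(M)`, the inverse `X⁻¹ = {x ∈ q(M) | x·X ⊆ M}`. -/
def invM (Q : Ideal D) (X : Set (FractionRing D)) : Set (FractionRing D) :=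
  {x | x ∈ quotM D Q ∧ ∀ y ∈ X, x * y ∈ monoidMK D Q}

/-- `J` is a fractional s-ideal of the monoid `M = D \ Q`: a nonempty subset of `q(M)`
with `J·M = J` such that `c·J ⊆ M` for some `c ∈ M`. -/
def IsFracSIdeal (Q : Ideal D) (J : Set (FractionRing D)) : Prop :=
  J.Nonempty ∧ J ⊆ quotM D Q ∧ J * monoidMK D Q = J ∧
    ∃ c ∈ monoidMK D Q, (c • J : Set (FractionRing D)) ⊆ monoidMK D Q

local notation "φ" => algebraMap D (FractionRing D)

section Aux

variable {Q : Ideal D}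

lemma FracSAux.mul_notMem (hQ : Q.IsPrime) {a b : D} (ha : a ∉ Q) (hb : b ∉ Q) :
    a * b ∉ Q := fun h => ((hQ.mem_or_mem h).elim ha hb)

lemma FracSAux.f_ne_zero (hQ : Q.IsPrime) {a : D} (ha : a ∉ Q) : φ a ≠ 0 := by
  have ha0 : a ≠ 0 := fun h => ha (h ▸ Q.zero_mem)
  exact fun h => ha0 (IsFractionRing.injective D (FractionRing D) (by simpa using h))

lemma FracSAux.M_mul (hQ : Q.IsPrime) {x y : FractionRing D} (hx : x ∈ monoidMK D Q)
    (hy : y ∈ monoidMK D Q) : x * y ∈ monoidMK D Q := by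
  obtain ⟨a, ha, rfl⟩ := hx; obtain ⟨b, hb, rfl⟩ := hy
  exact ⟨a * b, mul_notMem D hQ ha hb, (map_mul _ _ _).symm⟩

lemma FracSAux.M_subset_quotM (hQ : Q.IsPrime) : monoidMK D Q ⊆ quotM D Q := by
  rintro x ⟨a, ha, rfl⟩
  exact ⟨a, 1, ha, (Ideal.ne_top_iff_one Q).mp hQ.ne_top, by simp⟩

open FracSAux in
/-- The key lemma: `(JD)⁻¹ = J⁻¹·D` for a fractional s-ideal `J` of `M`. -/
lemma FracSAux.claimB (hQ : Q.IsPrime) {J : Set (FractionRing D)}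
    (hJ : IsFracSIdeal D Q J) :
    (1 : Submodule D (FractionRing D)) / Submodule.span D J
      = Submodule.span D (invM D Q J) := by
  obtain ⟨⟨j₀, hj₀⟩, hJq, -, c, hcM, hcJ⟩ := hJ
  obtain ⟨c₀, hc₀, rfl⟩ := hcM
  have hcmul : ∀ j ∈ J, φ c₀ * j ∈ monoidMK D Q := by
    intro j hj
    have := hcJ (Set.smul_mem_smul_set (a := φ c₀) hj)
    simpa [smul_eq_mul] using this
  have hcInv : φ c₀ ∈ invM D Q J :=
    ⟨M_subset_quotM D hQ ⟨c₀, hc₀, rfl⟩, hcmul⟩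
  apply le_antisymm
  · intro z hz
    have hzJ : ∀ j ∈ J, ∃ d : D, z * j = φ d := by
      intro j hj
      have h1 := Submodule.mem_div_iff_forall_mul_mem.mp hz j (Submodule.subset_span hj)
      obtain ⟨d, hd⟩ := Submodule.mem_one.mp h1
      exact ⟨d, hd.symm⟩
    by_cases hcase : ∃ j ∈ J, ∃ m : D, m ∉ Q ∧ z * j = φ m
    · -- Case 1: some z·j lies in M; then z itself is in J⁻¹.
      obtain ⟨j, hj, m, hm, hzj⟩ := hcase
      obtain ⟨a, b, ha, hb, rfl⟩ := hJq hj
      have hfa := f_ne_zero D hQ ha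
      have hfb := f_ne_zero D hQ hb
      have h1 : z * φ a = φ m * φ b := by
        field_simp at hzj
        linear_combination hzj
      refine Submodule.subset_span ⟨⟨m * b, a, mul_notMem D hQ hm hb, ha, ?_⟩, ?_⟩
      · rw [eq_div_iff hfa, map_mul]; exact h1
      · intro j' hj'
        obtain ⟨e, he⟩ := hzJ j' hj'
        obtain ⟨a', b', ha', hb', hj'eq⟩ := hJq hj'
        have hfb' := f_ne_zero D hQ hb'
        have h2 : φ e * φ b' = z * φ a' := by
          rw [hj'eq] at he
          field_simp at he
          linear_combination -he
        have h3 : e * (a * b') = m * (b * a') := by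
          apply IsFractionRing.injective D (FractionRing D)
          simp only [map_mul]
          linear_combination φ a * h2 + φ a' * h1
        have heQ : e ∉ Q := fun hh =>
          mul_notMem D hQ hm (mul_notMem D hQ hb ha') (h3 ▸ Q.mul_mem_right (a * b') hh)
        exact ⟨e, heQ, he⟩
    · -- Case 2: z·J ⊆ Q; then z = (z + c) - c with z + c, c ∈ J⁻¹.
      push_neg at hcase
      have hq : ∀ j ∈ J, ∃ q ∈ Q, z * j = φ q := by
        intro j hj
        obtain ⟨d, hd⟩ := hzJ j hj
        refine ⟨d, ?_, hd⟩
        by_contra hdQ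
        exact hcase j hj d hdQ hd
      have hwJ : ∀ j ∈ J, (z + φ c₀) * j ∈ monoidMK D Q := by
        intro j hj
        obtain ⟨q, hqQ, hzj⟩ := hq j hj
        obtain ⟨n, hn, hcj⟩ := hcmul j hj
        have hqn : q + n ∉ Q := fun h => hn (by simpa using Q.sub_mem h hqQ)
        exact ⟨q + n, hqn, by rw [add_mul, hzj, hcj, map_add]⟩
      have hwq : (z + φ c₀) ∈ quotM D Q := by
        obtain ⟨a₀, b₀, ha₀, hb₀, hj₀eq⟩ := hJq hj₀
        obtain ⟨s, hs, hws⟩ := hwJ j₀ hj₀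
        have hfa₀ := f_ne_zero D hQ ha₀
        have hfb₀ := f_ne_zero D hQ hb₀
        refine ⟨s * b₀, a₀, mul_notMem D hQ hs hb₀, ha₀, ?_⟩
        rw [eq_div_iff hfa₀, map_mul]
        rw [hj₀eq] at hws
        field_simp at hws
        linear_combination hws
      have hz' : z = (z + φ c₀) - φ c₀ := by ring
      rw [hz']
      exact sub_mem (Submodule.subset_span ⟨hwq, hwJ⟩) (Submodule.subset_span hcInv)
  · rw [Submodule.span_le]
    intro x hx
    rw [SetLike.mem_coe, Submodule.mem_div_iff_forall_mul_mem]
    have hle : Submodule.span D J ≤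
        Submodule.comap (LinearMap.mulLeft D x) (1 : Submodule D (FractionRing D)) := by
      rw [Submodule.span_le]
      intro j hj
      rw [SetLike.mem_coe, Submodule.mem_comap]
      obtain ⟨a, ha, haeq⟩ := hx.2 j hj
      exact Submodule.mem_one.mpr ⟨a, haeq.symm⟩
    intro y hy
    exact Submodule.mem_comap.mp (hle hy)

open FracSAux in
/-- The inverse of a fractional s-ideal is a fractional s-ideal. -/
lemma FracSAux.inv_isFracSIdeal (hQ : Q.IsPrime) {J : Set (FractionRing D)}
    (hJ : IsFracSIdeal D Q J) : IsFracSIdeal D Q (invM D Q J) := by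
  obtain ⟨⟨j₀, hj₀⟩, hJq, -, c, hcM, hcJ⟩ := hJ
  obtain ⟨c₀, hc₀, rfl⟩ := hcM
  have hcmul : ∀ j ∈ J, φ c₀ * j ∈ monoidMK D Q := by
    intro j hj
    have := hcJ (Set.smul_mem_smul_set (a := φ c₀) hj)
    simpa [smul_eq_mul] using this
  have hcInv : φ c₀ ∈ invM D Q J :=
    ⟨M_subset_quotM D hQ ⟨c₀, hc₀, rfl⟩, hcmul⟩
  refine ⟨⟨_, hcInv⟩, fun x hx => hx.1, ?_, ?_⟩
  · apply Set.Subset.antisymm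
    · intro x hx
      rw [Set.mem_mul] at hx
      obtain ⟨u, hu, v, hv, rfl⟩ := hx
      obtain ⟨n, hn, rfl⟩ := hv
      obtain ⟨a, b, ha, hb, hueq⟩ := hu.1
      refine ⟨⟨a * n, b, mul_notMem D hQ ha hn, hb, ?_⟩, ?_⟩
      · rw [hueq, map_mul]; ring
      · intro j hj
        have h : u * φ n * j = u * j * φ n := by ring
        rw [h]
        exact M_mul D hQ (hu.2 j hj) ⟨n, hn, rfl⟩
    · intro x hx
      rw [Set.mem_mul]
      exact ⟨x, hx, 1, ⟨1, (Ideal.ne_top_iff_one Q).mp hQ.ne_top, (map_one _).symm⟩,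
        mul_one x⟩
  · obtain ⟨n, hn, hcj⟩ := hcmul j₀ hj₀
    refine ⟨φ n, ⟨n, hn, rfl⟩, ?_⟩
    intro x hx
    rw [Set.mem_smul_set] at hx
    obtain ⟨u, hu, rfl⟩ := hx
    rw [smul_eq_mul]
    have h : φ n * u = φ c₀ * (u * j₀) := by rw [← hcj]; ring
    rw [h]
    exact M_mul D hQ ⟨c₀, hc₀, rfl⟩ (hu.2 j₀ hj₀)

end Aux

/-- **Lemma 3.1(3).** Let `D` be a domain with fraction field `K`, `Q` a prime ideal of `D`,
`M = D \ Q`, and `J` a fractional s-ideal of `M`. Then `(JD)_v = J_v·D`: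
`((JD)⁻¹)⁻¹` (computed for `D`-submodules of `K`) equals the `D`-submodule of `K`
generated by `J_v = (J⁻¹)⁻¹` (computed inside `q(M)`). -/
theorem v_closure_span_eq_span_v_closure (Q : Ideal D) (hQ : Q.IsPrime)
    (J : Set (FractionRing D)) (hJ : IsFracSIdeal D Q J) :
    (1 : Submodule D (FractionRing D)) /
        ((1 : Submodule D (FractionRing D)) / Submodule.span D J) =
      Submodule.span D (invM D Q (invM D Q J)) := by
  rw [FracSAux.claimB D hQ hJ, FracSAux.claimB D hQ (FracSAux.inv_isFracSIdeal D hQ hJ)]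

end
end

section
/- Let D be an integral domain with fraction field K, Q a prime ideal of D, M = D ∖ Q, and let J be a fractional s-ideal of M. Then (JD)_t = J_t·D, i.e., the union of B_v over all nonzero finitely generated D-submodules B of K with B ⊆ JD equals the D-submodule of K generated by J_t, where J_t is the union of E_v over all finite nonempty subsets E ⊆ J. -/
open scoped Pointwise

noncomputable section

variable (D : Type*) [CommRing D] [IsDomain D]

/-- The `t`-closure of a subset `X ⊆ q(M)`: the union of `E_v = (E⁻¹)⁻¹` over all finite
nonempty subsets `E ⊆ X`. -/
def tM (Q : Ideal D) (X : Set (FractionRing D)) : Set (FractionRing D) :=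
  {x | ∃ E : Set (FractionRing D), E ⊆ X ∧ E.Finite ∧ E.Nonempty ∧ x ∈ invM D Q (invM D Q E)}

/-- The `t`-closure of a `D`-submodule `N` of `K`: the union of `B_v = ((B⁻¹)⁻¹)` over all
nonzero finitely generated `D`-submodules `B ⊆ N` of `K`. -/
def tD (N : Submodule D (FractionRing D)) : Set (FractionRing D) :=
  {x | ∃ B : Submodule D (FractionRing D), B.FG ∧ B ≠ ⊥ ∧ B ≤ N ∧
    x ∈ (1 : Submodule D (FractionRing D)) / ((1 : Submodule D (FractionRing D)) / B)}

namespace AuxLem31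

variable {D}

local notation "K" => FractionRing D
local notation "φ" => algebraMap D (FractionRing D)

lemma quotM_ne_zero {Q : Ideal D} (hQ : Q.IsPrime) {x : K} (hx : x ∈ quotM D Q) : x ≠ 0 := by
  obtain ⟨a, b, ha, hb, rfl⟩ := hx
  have ha0 : a ≠ 0 := fun h => ha (h ▸ Q.zero_mem)
  have hb0 : b ≠ 0 := fun h => hb (h ▸ Q.zero_mem)
  exact div_ne_zero
    ((map_ne_zero_iff _ (IsFractionRing.injective D K)).mpr ha0)
    ((map_ne_zero_iff _ (IsFractionRing.injective D K)).mpr hb0)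

lemma monoidMK_subset_quotM {Q : Ideal D} (hQ : Q.IsPrime) : monoidMK D Q ⊆ quotM D Q := by
  rintro x ⟨a, ha, rfl⟩
  exact ⟨a, 1, ha, fun h => hQ.ne_top (Q.eq_top_iff_one.mpr h), by simp⟩

lemma quotM_mul {Q : Ideal D} (hQ : Q.IsPrime) {x y : K} (hx : x ∈ quotM D Q)
    (hy : y ∈ quotM D Q) : x * y ∈ quotM D Q := by
  obtain ⟨a, b, ha, hb, rfl⟩ := hx
  obtain ⟨c, d, hc, hd, rfl⟩ := hy
  refine ⟨a * c, b * d, fun h => ?_, fun h => ?_, by push_cast [map_mul]; ring⟩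
  · rcases hQ.mem_or_mem h with h | h <;> [exact ha h; exact hc h]
  · rcases hQ.mem_or_mem h with h | h <;> [exact hb h; exact hd h]

lemma monoidMK_subset_one {Q : Ideal D} : monoidMK D Q ⊆ (1 : Submodule D K) := by
  rintro x ⟨a, _, rfl⟩
  exact Submodule.mem_one.mpr ⟨a, rfl⟩

lemma mem_monoidMK_of_mem_one {Q : Ideal D} (hQ : Q.IsPrime) {x : K} (hx : x ∈ quotM D Q)
    (h1 : x ∈ (1 : Submodule D K)) : x ∈ monoidMK D Q := by
  obtain ⟨a, b, ha, hb, rfl⟩ := hx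
  obtain ⟨d, hd⟩ := Submodule.mem_one.mp h1
  have hb0 : φ b ≠ 0 := (map_ne_zero_iff _ (IsFractionRing.injective D K)).mpr
    (fun h => hb (h ▸ Q.zero_mem))
  have hdb : φ (d * b) = φ a := by
    rw [map_mul, hd, div_mul_cancel₀ _ hb0]
  have : d * b = a := IsFractionRing.injective D K hdb
  refine ⟨d, fun hdQ => ha ?_, ?_⟩
  · rw [← this]; exact Q.mul_mem_right b hdQ
  · rw [hd]

/-- If `z` kills `X` into `D` and `z·x₀` is the image of an element outside `Q` for some
`x₀ ∈ X`, then `z ∈ X⁻¹`. -/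
lemma mem_invM_of_good {Q : Ideal D} (hQ : Q.IsPrime) {X : Set K} (hX : X ⊆ quotM D Q)
    {z : K} (hz : ∀ y ∈ X, z * y ∈ (1 : Submodule D K))
    {x0 : K} (hx0 : x0 ∈ X) {d : D} (hd : d ∉ Q) (hzd : z * x0 = φ d) :
    z ∈ invM D Q X := by
  have hzq : z ∈ quotM D Q := by
    obtain ⟨a, b, ha, hb, hab⟩ := hX hx0
    have ha0 : φ a ≠ 0 := (map_ne_zero_iff _ (IsFractionRing.injective D K)).mpr
      (fun h => ha (h ▸ Q.zero_mem))
    have hb0 : φ b ≠ 0 := (map_ne_zero_iff _ (IsFractionRing.injective D K)).mpr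
      (fun h => hb (h ▸ Q.zero_mem))
    refine ⟨d * b, a, fun h => ?_, ha, ?_⟩
    · rcases hQ.mem_or_mem h with h | h <;> [exact hd h; exact hb h]
    · have h2 : z * φ a = φ d * φ b := by
        rw [hab] at hzd
        field_simp at hzd
        linear_combination hzd
      rw [map_mul, eq_div_iff ha0]
      linear_combination h2
  exact ⟨hzq, fun y hy =>
    mem_monoidMK_of_mem_one hQ (quotM_mul hQ hzq (hX hy)) (hz y hy)⟩

/-- Claim A: `(span X)⁻¹ = span (X⁻¹)` for a nonempty `X ⊆ q(M)` with `X⁻¹` nonempty. -/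
lemma one_div_span_eq {Q : Ideal D} (hQ : Q.IsPrime) {X : Set K} (hX : X ⊆ quotM D Q)
    (hne : X.Nonempty) {w : K} (hw : w ∈ invM D Q X) :
    (1 : Submodule D K) / Submodule.span D X = Submodule.span D (invM D Q X) := by
  apply le_antisymm
  · intro z hz
    have hz' : ∀ y ∈ X, z * y ∈ (1 : Submodule D K) := fun y hy =>
      Submodule.mem_div_iff_forall_mul_mem.mp hz y (Submodule.subset_span hy)
    obtain ⟨x0, hx0⟩ := hne
    obtain ⟨d0, hd0⟩ := Submodule.mem_one.mp (hz' x0 hx0)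
    by_cases hdQ : d0 ∈ Q
    · -- z + w is good, so z = (z+w) - w
      obtain ⟨m0, hm0Q, hm0⟩ := hw.2 x0 hx0
      have hzw : ∀ y ∈ X, (z + w) * y ∈ (1 : Submodule D K) := by
        intro y hy
        rw [add_mul]
        exact Submodule.add_mem _ (hz' y hy) (monoidMK_subset_one (hw.2 y hy))
      have hsum : d0 + m0 ∉ Q := fun h => hm0Q (by
        have : m0 = (d0 + m0) - d0 := by ring
        rw [this]; exact Q.sub_mem h hdQ)
      have hgood : z + w ∈ invM D Q X := by
        refine mem_invM_of_good hQ hX hzw hx0 hsum ?_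
        rw [add_mul, ← hd0, hm0, map_add]
      have h1 : z + w ∈ Submodule.span D (invM D Q X) := Submodule.subset_span hgood
      have h2 : w ∈ Submodule.span D (invM D Q X) := Submodule.subset_span hw
      have : z = (z + w) - w := by ring
      rw [this]
      exact Submodule.sub_mem _ h1 h2
    · exact Submodule.subset_span (mem_invM_of_good hQ hX hz' hx0 hdQ hd0.symm)
  · rw [Submodule.span_le]
    intro z hz
    rw [SetLike.mem_coe, Submodule.mem_div_iff_forall_mul_mem]
    intro y hy
    have : Submodule.span D X ≤ Submodule.comap (LinearMap.mulLeft D z)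
        (1 : Submodule D K) := by
      rw [Submodule.span_le]
      intro u hu
      exact monoidMK_subset_one (hz.2 u hu)
    exact this hy

lemma invM_anti {Q : Ideal D} {X Y : Set K} (h : X ⊆ Y) : invM D Q Y ⊆ invM D Q X :=
  fun z hz => ⟨hz.1, fun y hy => hz.2 y (h hy)⟩

/-- For finite nonempty `E ⊆ J`: `(span E)_v = span E_v` (where the latter `v` is for `M`). -/
lemma spanE_v_eq {Q : Ideal D} (hQ : Q.IsPrime) {J : Set K} (hJ : IsFracSIdeal D Q J)
    {E : Set K} (hE : E ⊆ J) (hne : E.Nonempty) :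
    (1 : Submodule D K) / ((1 : Submodule D K) / Submodule.span D E)
      = Submodule.span D (invM D Q (invM D Q E)) := by
  obtain ⟨hJne, hJq, _, c, hcM, hcJ⟩ := hJ
  have hEq : E ⊆ quotM D Q := fun x hx => hJq (hE hx)
  have hc : c ∈ invM D Q E := by
    refine ⟨monoidMK_subset_quotM hQ hcM, fun y hy => ?_⟩
    exact hcJ (Set.smul_mem_smul_set (hE hy))
  have hinvq : invM D Q E ⊆ quotM D Q := fun z hz => hz.1
  obtain ⟨e0, he0⟩ := hne
  have he0' : e0 ∈ invM D Q (invM D Q E) :=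
    ⟨hEq he0, fun z hz => by rw [mul_comm]; exact hz.2 e0 he0⟩
  rw [one_div_span_eq hQ hEq ⟨e0, he0⟩ hc, one_div_span_eq hQ hinvq ⟨c, hc⟩ he0']

/-- Any finite subset of `span J` lies in the span of a finite subset of `J`. -/
lemma exists_finset_span {J : Set K} (S : Finset K)
    (hS : (S : Set K) ⊆ (Submodule.span D J : Set K)) :
    ∃ T : Finset K, (T : Set K) ⊆ J ∧ (S : Set K) ⊆ (Submodule.span D (T : Set K) : Set K) := by
  classical
  revert hS
  induction S using Finset.induction_on with
  | empty => exact fun _ => ⟨∅, by simp, by simp⟩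
  | @insert s S hsS ih =>
    intro hS
    obtain ⟨T, hT, hST⟩ := ih (fun x hx => hS (Finset.mem_insert_of_mem hx))
    obtain ⟨T', hT', hsT'⟩ := Submodule.mem_span_finite_of_mem_span
      (hS (Finset.mem_insert_self s S))
    refine ⟨T ∪ T', ?_, ?_⟩
    · rw [Finset.coe_union]
      exact Set.union_subset hT hT'
    · intro x hx
      rcases Finset.mem_insert.mp hx with rfl | hx
      · exact Submodule.span_mono (by rw [Finset.coe_union]; exact Set.subset_union_right) hsT'
      · exact Submodule.span_mono (by rw [Finset.coe_union]; exact Set.subset_union_left)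
          (hST hx)

/-- `v` is antitone-squared: `B ≤ C → B_v ≤ C_v`. -/
lemma v_mono {B C : Submodule D K} (h : B ≤ C) :
    (1 : Submodule D K) / ((1 : Submodule D K) / B) ≤
      (1 : Submodule D K) / ((1 : Submodule D K) / C) := by
  intro x hx
  rw [Submodule.mem_div_iff_forall_mul_mem] at hx ⊢
  intro y hy
  refine hx y ?_
  rw [Submodule.mem_div_iff_forall_mul_mem] at hy ⊢
  exact fun u hu => hy u (h hu)

end AuxLem31

/-- **Lemma 3.1(4).** -/
theorem t_closure_span_eq_span_t_closure (Q : Ideal D) (hQ : Q.IsPrime)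
    (J : Set (FractionRing D)) (hJ : IsFracSIdeal D Q J) :
    tD D (Submodule.span D J) = (Submodule.span D (tM D Q J) : Set (FractionRing D)) := by
  classical
  obtain ⟨j0, hj0⟩ := hJ.1
  have hJq := hJ.2.1
  ext x
  constructor
  · rintro ⟨B, hfg, -, hle, hx⟩
    obtain ⟨S, hSspan⟩ := hfg
    have hSsub : (S : Set (FractionRing D)) ⊆ (Submodule.span D J : Set (FractionRing D)) :=
      fun s hs => hle (hSspan ▸ Submodule.subset_span hs)
    obtain ⟨T, hTJ, hST⟩ := AuxLem31.exists_finset_span S hSsub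
    set E : Set (FractionRing D) := insert j0 (T : Set (FractionRing D)) with hEdef
    have hEJ : E ⊆ J := Set.insert_subset hj0 hTJ
    have hEfin : E.Finite := T.finite_toSet.insert j0
    have hEne : E.Nonempty := ⟨j0, Set.mem_insert _ _⟩
    have hBle : B ≤ Submodule.span D E := by
      rw [← hSspan, Submodule.span_le]
      intro s hs
      exact Submodule.span_mono (Set.subset_insert _ _) (hST hs)
    have hx' := AuxLem31.v_mono hBle hx
    rw [AuxLem31.spanE_v_eq hQ hJ hEJ hEne] at hx'
    have hsub : invM D Q (invM D Q E) ⊆ tM D Q J :=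
      fun y hy => ⟨E, hEJ, hEfin, hEne, hy⟩
    exact SetLike.mem_coe.mpr (Submodule.span_mono hsub hx')
  · intro hx
    rw [SetLike.mem_coe] at hx
    obtain ⟨T, hTsub, hxT⟩ := Submodule.mem_span_finite_of_mem_span hx
    have h : ∀ t : FractionRing D, ∃ E : Set (FractionRing D), E ⊆ J ∧ E.Finite ∧
        E.Nonempty ∧ (t ∈ (T : Set (FractionRing D)) → t ∈ invM D Q (invM D Q E)) := by
      intro t
      by_cases ht : t ∈ (T : Set (FractionRing D))
      · obtain ⟨E, h1, h2, h3, h4⟩ := hTsub ht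
        exact ⟨E, h1, h2, h3, fun _ => h4⟩
      · exact ⟨{j0}, by simpa using hj0, Set.finite_singleton _, ⟨j0, rfl⟩,
          fun c => absurd c ht⟩
    choose E0 hE1 hE2 hE3 hE4 using h
    set E : Set (FractionRing D) :=
      insert j0 (⋃ t ∈ (T : Set (FractionRing D)), E0 t) with hEdef
    have hEJ : E ⊆ J :=
      Set.insert_subset hj0 (Set.iUnion₂_subset fun t _ => hE1 t)
    have hEfin : E.Finite :=
      (Set.Finite.biUnion T.finite_toSet (fun t _ => hE2 t)).insert j0
    have hEne : E.Nonempty := ⟨j0, Set.mem_insert _ _⟩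
    have hT' : (T : Set (FractionRing D)) ⊆
        (Submodule.span D (invM D Q (invM D Q E)) : Set (FractionRing D)) := by
      intro t ht
      have hsub : E0 t ⊆ E :=
        (Set.subset_biUnion_of_mem ht).trans (Set.subset_insert _ _)
      exact Submodule.subset_span (AuxLem31.invM_anti (AuxLem31.invM_anti hsub) (hE4 t ht))
    have hxE : x ∈ Submodule.span D (invM D Q (invM D Q E)) :=
      Submodule.span_le.mpr hT' hxT
    rw [← AuxLem31.spanE_v_eq hQ hJ hEJ hEne] at hxE
    refine ⟨Submodule.span D E, Submodule.fg_span hEfin, ?_, Submodule.span_mono hEJ, hxE⟩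
    intro hbot
    have hj0' : j0 ∈ Submodule.span D E := Submodule.subset_span (Set.mem_insert _ _)
    rw [hbot, Submodule.mem_bot] at hj0'
    exact AuxLem31.quotM_ne_zero hQ (hJq hj0) hj0'

end
end

section
/- Let R be an integral domain, σ a set of indeterminates, and N a multiplicative submonoid of R with 0 ∉ N. If g is a prime element of the polynomial ring R[{X_α | α ∈ σ}] that is not a constant polynomial (g is not in the image of R under the constants embedding), then the image of g under the natural map R[{X_α | α ∈ σ}] → R_N[{X_α | α ∈ σ}] induced by the localization map R → R_N is a prime element of R_N[{X_α | α ∈ σ}]. -/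
open MvPolynomial

/-- In a domain, a divisor of a nonzero constant polynomial (single variable) is constant. -/
private lemma aux_poly {A : Type*} [CommRing A] [IsDomain A] {c : A} (hc : c ≠ 0)
    {p q : Polynomial A} (h : p * q = Polynomial.C c) : p = Polynomial.C (p.coeff 0) := by
  have hp : p ≠ 0 := by rintro rfl; rw [zero_mul] at h; exact hc (Polynomial.C_injective (by simp [h.symm]))
  have hq : q ≠ 0 := by rintro rfl; rw [mul_zero] at h; exact hc (Polynomial.C_injective (by simp [h.symm]))
  have hdeg : p.natDegree + q.natDegree = 0 := by
    rw [← Polynomial.natDegree_mul hp hq, h, Polynomial.natDegree_C]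
  exact Polynomial.eq_C_of_natDegree_eq_zero (Nat.eq_zero_of_add_eq_zero_right hdeg)

/-- In a domain, a divisor of a nonzero constant mv-polynomial over `Fin k` is constant. -/
private lemma aux_fin {A : Type*} [CommRing A] [IsDomain A] :
    ∀ (k : ℕ) {c : A}, c ≠ 0 → ∀ {p q : MvPolynomial (Fin k) A},
      p * q = C c → ∃ a : A, p = C a := by
  intro k
  induction k with
  | zero => intro c hc p q h; exact ⟨constantCoeff p, (eq_C_of_isEmpty p)⟩
  | succ n ih =>
    intro c hc p q h
    have h' : (finSuccEquiv A n p) * (finSuccEquiv A n q) = Polynomial.C (C c) := by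
      rw [← map_mul, h]
      simp [finSuccEquiv_apply]
    have hCc : (C c : MvPolynomial (Fin n) A) ≠ 0 := by
      simpa using hc
    have hp0 := aux_poly hCc h'
    -- coefficient relation
    have hcoeff : ((finSuccEquiv A n p).coeff 0) * ((finSuccEquiv A n q).coeff 0) = C c := by
      have := congrArg (fun r : Polynomial (MvPolynomial (Fin n) A) => r.coeff 0) h'
      rw [hp0] at this
      simpa using this
    obtain ⟨a, ha⟩ := ih hc hcoeff
    refine ⟨a, ?_⟩
    have : finSuccEquiv A n p = finSuccEquiv A n (C a) := by
      rw [hp0, ha]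
      simp [finSuccEquiv_apply, MvPolynomial.algebraMap_eq]
    exact (finSuccEquiv A n).injective this

/-- In a domain, a divisor of a nonzero constant mv-polynomial is constant. -/
private lemma aux_const {A : Type*} [CommRing A] [IsDomain A] {σ : Type*} {c : A} (hc : c ≠ 0)
    {p : MvPolynomial σ A} (hdvd : p ∣ C c) : ∃ a : A, p = C a := by
  obtain ⟨q, hq⟩ := hdvd
  obtain ⟨s, p', q', rfl, rfl⟩ := exists_finset_rename₂ p q
  have hren : rename ((↑) : s → σ) (p' * q') = rename ((↑) : s → σ) (C c) := by
    rw [map_mul, rename_C, ← hq]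
  have h1 : p' * q' = C c := rename_injective _ Subtype.val_injective hren
  -- transport to Fin
  classical
  let e := renameEquiv A (Fintype.equivFin s)
  have h2 : (e p') * (e q') = C c := by
    rw [← map_mul, h1]
    simp [e]
  obtain ⟨a, ha⟩ := aux_fin (Fintype.card s) hc h2
  have : e p' = e (C a) := by rw [ha]; simp [e]
  refine ⟨a, ?_⟩
  rw [e.injective this, rename_C]

/-- Let `R` be an integral domain, `σ` a set of indeterminates, and `N` a multiplicative
submonoid of `R` with `0 ∉ N`. If `g` is a nonconstant prime element of the polynomial ring
`R[{X_α | α ∈ σ}]`, then the image of `g` in `R_N[{X_α | α ∈ σ}]` under the map induced by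
the localization map `R → R_N` is again a prime element. -/
theorem prime_map_localization_of_prime_nonconstant {R : Type*} [CommRing R] [IsDomain R]
    (σ : Type*) (N : Submonoid R) (h0 : (0 : R) ∉ N) (g : MvPolynomial σ R)
    (hg : Prime g) (hnc : g ∉ Set.range (MvPolynomial.C : R → MvPolynomial σ R)) :
    Prime (MvPolynomial.map (algebraMap R (Localization N)) g) := by
  letI : Algebra (MvPolynomial σ R) (MvPolynomial σ (Localization N)) :=
    MvPolynomial.algebraMvPolynomial
  haveI : IsDomain (Localization N) :=
    IsLocalization.isDomain_localization (fun n hn =>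
      mem_nonZeroDivisors_of_ne_zero (fun h => h0 (h ▸ hn)))
  have hN : N ≤ nonZeroDivisors R := fun n hn =>
    mem_nonZeroDivisors_of_ne_zero (fun h => h0 (h ▸ hn))
  have hinj : Function.Injective (algebraMap R (Localization N)) :=
    IsLocalization.injective _ hN
  have hmapinj : Function.Injective (MvPolynomial.map (algebraMap R (Localization N))) :=
    MvPolynomial.map_injective (σ := σ) _ hinj
  -- the span of g is a prime ideal disjoint from the image of N
  have hI : (Ideal.span {g}).IsPrime := (Ideal.span_singleton_prime hg.ne_zero).mpr hg
  have hd : Disjoint ((N.map (C (σ := σ)) : Submonoid (MvPolynomial σ R)) : Set (MvPolynomial σ R))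
      ((Ideal.span {g} : Ideal (MvPolynomial σ R)) : Set (MvPolynomial σ R)) := by
    rw [Set.disjoint_left]
    rintro x ⟨n, hn, rfl⟩ hx
    have hdvd : g ∣ C n := Ideal.mem_span_singleton.mp hx
    have hn0 : n ≠ 0 := fun h => h0 (h ▸ hn)
    obtain ⟨a, ha⟩ := aux_const hn0 hdvd
    exact hnc ⟨a, ha.symm⟩
  have hprime : (Ideal.map (algebraMap (MvPolynomial σ R) (MvPolynomial σ (Localization N)))
      (Ideal.span {g})).IsPrime :=
    IsLocalization.isPrime_of_isPrime_disjoint (N.map (C (σ := σ))) _ _ hI hd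
  have heq : Ideal.map (algebraMap (MvPolynomial σ R) (MvPolynomial σ (Localization N)))
      (Ideal.span {g}) =
      Ideal.span {MvPolynomial.map (algebraMap R (Localization N)) g} := by
    rw [Ideal.map_span, Set.image_singleton]
    rfl
  rw [heq] at hprime
  have hgne : MvPolynomial.map (algebraMap R (Localization N)) g ≠ 0 := by
    intro h
    exact hg.ne_zero (hmapinj (by simpa using h))
  exact (Ideal.span_singleton_prime hgne).mp hprime
end
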